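/- (Partial q-difference equation in x for 2D q-Bernoulli polynomials.) For every n ≥ 1: Σ_{k=1}^{n} (q^{n−k}/[k]_q!) (α_k^B + [k]_q β_{k−1}^B y) D_{q,x}^{k} B_{n,q}(x,y) + q^{n} x · D_{q,x} B_{n,q}(x,y) − [n]_q · B_{n,q}(qx,y) = 0, where B_{n,q}(qx,y) denotes the polynomial obtained from B_{n,q}(x,y) by substituting qx for x. -/

import Mathlib

noncomputable section

open Finset MvPolynomial

/-- The `q`-integer `[n]_q = 1 + q + ⋯ + q^(n-1)`. -/
def qInt {K : Type*} [Field K] (q : K) (n : ℕ) : K := ∑ i ∈ Finset.range n, q ^ i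

/-- The `q`-factorial `[n]_q! = [1]_q [2]_q ⋯ [n]_q`. -/
def qFact {K : Type*} [Field K] (q : K) (n : ℕ) : K := ∏ k ∈ Finset.range n, qInt q (k + 1)

/-- The `q`-binomial coefficient `[n choose k]_q`. -/
def qChoose {K : Type*} [Field K] (q : K) (n k : ℕ) : K :=
  qFact q n / (qFact q k * qFact q (n - k))

/-- The partial `q`-derivative in the variable `v` (v = 0 is `x`, v = 1 is `y`),
the linear operator determined by `D_{q,x}(x^m y^l) = [m]_q x^(m-1) y^l` and
`D_{q,y}(x^m y^l) = [l]_q x^m y^(l-1)`. -/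
def qDeriv {K : Type*} [Field K] (q : K) (v : Fin 2) (P : MvPolynomial (Fin 2) K) :
    MvPolynomial (Fin 2) K :=
  ∑ m ∈ P.support, monomial (m - Finsupp.single v 1) (P.coeff m * qInt q (m v))

/-- Substitution `x ↦ c·x` in a polynomial in the two variables `x = X 0`, `y = X 1`. -/
def substX {K : Type*} [Field K] (c : K) (P : MvPolynomial (Fin 2) K) :
    MvPolynomial (Fin 2) K :=
  aeval (fun i : Fin 2 => if i = 0 then C c * X 0 else X 1) P

/-- Substitution `y ↦ c·y` in a polynomial in the two variables `x = X 0`, `y = X 1`. -/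
def substY {K : Type*} [Field K] (c : K) (P : MvPolynomial (Fin 2) K) :
    MvPolynomial (Fin 2) K :=
  aeval (fun i : Fin 2 => if i = 0 then X 0 else C c * X 1) P

/-- The 2D `q`-Appell polynomials attached to a coefficient sequence `a`:
`A_{n,q}(x,y) = Σ_{i+j+k=n} ([n]_q!/([i]_q![j]_q![k]_q!)) a_i q^(k(k-1)/2) x^j y^k`. -/
def appell {K : Type*} [Field K] (q : K) (a : ℕ → K) (n : ℕ) : MvPolynomial (Fin 2) K :=
  ∑ i ∈ Finset.range (n + 1), ∑ j ∈ Finset.range (n + 1 - i),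
    monomial (Finsupp.single (0 : Fin 2) j + Finsupp.single (1 : Fin 2) (n - i - j))
      (qFact q n / (qFact q i * qFact q j * qFact q (n - i - j)) * a i *
        q ^ ((n - i - j) * (n - i - j - 1) / 2))

/-!
Comparing coefficients of `x^j y^l`, and using `D_{q,x} B_{n,q} = [n]_q B_{n-1,q}`, the equation
reduces, with `N = n - j - l`, to `[n]_q = [l]_q + q^l [N]_q + q^(l+N) [j]_q` and the two
convolution identities
`∑_{k=1}^N [N choose k]_q α_k q^(N-k) b_{N-k} = [N]_q b_N` and
`∑_{r=0}^N [N choose r]_q β_r q^(N-r) b_{N-r} = b_N`.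
Since `α_k` and `β_k` are multiples of the coefficients `∑_j [k choose j]_q b_j` of `e_q(t) B(t)`,
where `B(t) = ∑ b_n t^n / [n]_q!` and `e_q(t) = ∑ t^n / [n]_q!`, both identities are coefficients of
`(q - 1) e_q(t) B(t) B(qt) = q B(t) - B(qt)`. This follows from `B(t) (e_q(t) - 1) = t` (the
recursion for `b`) and `e_q(qt) = e_q(t) (1 + (q - 1) t)`, after cancelling the nonzero series
`e_q(t) - 1`.
-/

section

variable {K : Type*} [Field K]

theorem qInt_zero (q : K) : qInt q 0 = 0 := by simp [qInt]

theorem qInt_add (q : K) (m n : ℕ) : qInt q (m + n) = qInt q m + q ^ m * qInt q n := by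
  simp only [qInt, Finset.sum_range_add, pow_add, Finset.mul_sum]

theorem qInt_mul_sub_one (q : K) (n : ℕ) : qInt q n * (q - 1) = q ^ n - 1 := geom_sum_mul q n

theorem qFact_zero (q : K) : qFact q 0 = 1 := by simp [qFact]

theorem qFact_succ (q : K) (n : ℕ) : qFact q (n + 1) = qFact q n * qInt q (n + 1) :=
  Finset.prod_range_succ _ _

theorem qFact_ne_zero {q : K} (hq : ∀ n : ℕ, 1 ≤ n → qInt q n ≠ 0) (n : ℕ) : qFact q n ≠ 0 :=
  Finset.prod_ne_zero_iff.mpr fun k _ => hq (k + 1) k.succ_pos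

theorem qChoose_zero_right {q : K} (hq : ∀ n : ℕ, 1 ≤ n → qInt q n ≠ 0) (n : ℕ) :
    qChoose q n 0 = 1 := by
  rw [qChoose, qFact_zero, one_mul, Nat.sub_zero, div_self (qFact_ne_zero hq n)]

theorem qChoose_self {q : K} (hq : ∀ n : ℕ, 1 ≤ n → qInt q n ≠ 0) (n : ℕ) : qChoose q n n = 1 := by
  rw [qChoose, Nat.sub_self, qFact_zero, mul_one, div_self (qFact_ne_zero hq n)]

theorem sum_range_succ_eq_add_sum_Icc {M : Type*} [AddCommMonoid M] (f : ℕ → M) (N : ℕ) :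
    ∑ r ∈ Finset.range (N + 1), f r = f 0 + ∑ r ∈ Finset.Icc 1 N, f r := by
  rw [Finset.range_eq_Ico, Finset.sum_eq_sum_Ico_succ_bot N.succ_pos, zero_add,
    Nat.succ_eq_add_one, Finset.Ico_add_one_right_eq_Icc]

theorem sum_Icc_ite_le {M : Type*} [AddCommMonoid M] (f : ℕ → M) {N n : ℕ} (h : N ≤ n) :
    ∑ k ∈ Finset.Icc 1 n, (if k ≤ N then f k else 0) = ∑ k ∈ Finset.Icc 1 N, f k := by
  rw [← Finset.sum_filter]
  congr 1
  ext k
  simp only [Finset.mem_filter, Finset.mem_Icc]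
  omega

theorem sum_Icc_pred {M : Type*} [AddCommMonoid M] (f : ℕ → M) (N : ℕ) :
    ∑ k ∈ Finset.Icc 1 (N + 1), f (k - 1) = ∑ r ∈ Finset.range (N + 1), f r := by
  rw [← Finset.Ico_add_one_right_eq_Icc, Finset.sum_Ico_eq_sum_range]
  simp

def qEgf (q : K) (a : ℕ → K) : PowerSeries K := PowerSeries.mk fun n => a n / qFact q n

def qExp (q : K) : PowerSeries K := qEgf q 1

def qConv (q : K) (a c : ℕ → K) (n : ℕ) : K :=
  ∑ i ∈ Finset.range (n + 1), qChoose q n i * a i * c (n - i)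

@[simp]
theorem coeff_qEgf (q : K) (a : ℕ → K) (n : ℕ) :
    PowerSeries.coeff n (qEgf q a) = a n / qFact q n :=
  PowerSeries.coeff_mk _ _

theorem qEgf_mul {q : K} (hq : ∀ n : ℕ, 1 ≤ n → qInt q n ≠ 0) (a c : ℕ → K) :
    qEgf q a * qEgf q c = qEgf q (qConv q a c) := by
  ext n
  rw [PowerSeries.coeff_mul, Finset.Nat.sum_antidiagonal_eq_sum_range_succ
    (fun i j => PowerSeries.coeff i (qEgf q a) * PowerSeries.coeff j (qEgf q c)),
    coeff_qEgf, qConv, Finset.sum_div]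
  refine Finset.sum_congr rfl fun i _ => ?_
  simp only [coeff_qEgf, qChoose]
  field_simp [qFact_ne_zero hq]

theorem rescale_qEgf (q c : K) (a : ℕ → K) :
    PowerSeries.rescale c (qEgf q a) = qEgf q fun n => c ^ n * a n := by
  ext n
  simp [mul_div_assoc]

theorem rescale_qExp {q : K} (hq : ∀ n : ℕ, 1 ≤ n → qInt q n ≠ 0) :
    PowerSeries.rescale q (qExp q) = qExp q * (1 + PowerSeries.C (q - 1) * PowerSeries.X) := by
  ext n
  rw [mul_add, mul_one, mul_left_comm, map_add, PowerSeries.coeff_C_mul, qExp, rescale_qEgf]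
  rcases n with _ | n
  · simp
  · rw [PowerSeries.coeff_succ_mul_X]
    simp only [coeff_qEgf, Pi.one_apply, mul_one, qFact_succ]
    field_simp [qFact_ne_zero hq n, hq (n + 1) n.succ_pos]
    rw [qInt_mul_sub_one]
    ring

theorem qExp_sub_one_ne_zero (q : K) : qExp q - 1 ≠ 0 := fun h => by
  simpa [qExp, qFact_succ, qFact_zero, qInt] using congrArg (PowerSeries.coeff 1) h

theorem qEgf_mul_qExp_sub_one {q : K} (hq : ∀ n : ℕ, 1 ≤ n → qInt q n ≠ 0) {b : ℕ → K}
    (hb0 : b 0 = 1) (hb : ∀ n : ℕ, 2 ≤ n → ∑ k ∈ Finset.range n, qChoose q n k * b k = 0) :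
    qEgf q b * (qExp q - 1) = PowerSeries.X := by
  ext n
  rw [mul_sub, mul_one, qExp, qEgf_mul hq, map_sub, coeff_qEgf, coeff_qEgf, ← sub_div, qConv,
    Finset.sum_range_succ, Nat.sub_self, qChoose_self hq, PowerSeries.coeff_X]
  simp only [Pi.one_apply, mul_one, one_mul, add_sub_cancel_right]
  match n with
  | 0 => simp
  | 1 => simp [qChoose_zero_right hq, hb0, qFact_succ, qFact_zero, qInt]
  | n + 2 => simp [hb (n + 2) (by omega)]

theorem qBernoulli_egf_identity {q : K} (hq : ∀ n : ℕ, 1 ≤ n → qInt q n ≠ 0) {b : ℕ → K}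
    (hb0 : b 0 = 1) (hb : ∀ n : ℕ, 2 ≤ n → ∑ k ∈ Finset.range n, qChoose q n k * b k = 0) :
    PowerSeries.C (q - 1) * (qEgf q b * qExp q * PowerSeries.rescale q (qEgf q b)) =
      PowerSeries.C q * qEgf q b - PowerSeries.rescale q (qEgf q b) := by
  have hB := qEgf_mul_qExp_sub_one hq hb0 hb
  have hR := congrArg (PowerSeries.rescale q) hB
  rw [map_mul, map_sub, map_one, rescale_qExp hq, PowerSeries.rescale_X] at hR
  refine mul_right_cancel₀ (qExp_sub_one_ne_zero q) ?_
  linear_combination (PowerSeries.C (q - 1) * qExp q * PowerSeries.rescale q (qEgf q b) -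
    PowerSeries.C q) * hB + hR

theorem qBernoulli_conv_identity {q : K} (hq : ∀ n : ℕ, 1 ≤ n → qInt q n ≠ 0) {b : ℕ → K}
    (hb0 : b 0 = 1) (hb : ∀ n : ℕ, 2 ≤ n → ∑ k ∈ Finset.range n, qChoose q n k * b k = 0)
    (N : ℕ) :
    (q - 1) * ∑ r ∈ Finset.Icc 1 N, qChoose q N r *
        (∑ j ∈ Finset.range (r + 1), qChoose q r j * b j) * (q ^ (N - r) * b (N - r)) =
      q * (1 - q ^ N) * b N := by
  have h := congrArg (PowerSeries.coeff N) (qBernoulli_egf_identity hq hb0 hb)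
  rw [qExp, qEgf_mul hq, rescale_qEgf, qEgf_mul hq, PowerSeries.coeff_C_mul, map_sub,
    PowerSeries.coeff_C_mul, coeff_qEgf, coeff_qEgf, coeff_qEgf] at h
  simp only [mul_div_assoc', ← sub_div, div_left_inj' (qFact_ne_zero hq N), qConv, Pi.one_apply,
    mul_one] at h
  rw [sum_range_succ_eq_add_sum_Icc] at h
  simp only [zero_add, Finset.sum_range_one, qChoose_zero_right hq, hb0, Nat.sub_zero,
    one_mul] at h
  linear_combination h

theorem sum_qChoose_mul_alpha {q : K} (hq0 : q ≠ 0) (hq1 : q ≠ 1)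
    (hq : ∀ n : ℕ, 1 ≤ n → qInt q n ≠ 0) {b : ℕ → K} (hb0 : b 0 = 1)
    (hb : ∀ n : ℕ, 2 ≤ n → ∑ k ∈ Finset.range n, qChoose q n k * b k = 0) {αB : ℕ → K}
    (hαB : ∀ k : ℕ, 1 ≤ k → αB k = -(1 / q) * ∑ j ∈ Finset.range (k + 1), qChoose q k j * b j)
    (N : ℕ) :
    ∑ k ∈ Finset.Icc 1 N, αB k * (qChoose q N k * (q ^ (N - k) * b (N - k))) =
      qInt q N * b N := by
  have h := qBernoulli_conv_identity hq hb0 hb N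
  set T := ∑ k ∈ Finset.Icc 1 N, qChoose q N k *
    (∑ j ∈ Finset.range (k + 1), qChoose q k j * b j) * (q ^ (N - k) * b (N - k))
  have hα : ∑ k ∈ Finset.Icc 1 N, αB k * (qChoose q N k * (q ^ (N - k) * b (N - k))) =
      -(1 / q) * T := by
    rw [Finset.mul_sum]
    exact Finset.sum_congr rfl fun k hk => by rw [hαB k (Finset.mem_Icc.mp hk).1]; ring
  rw [hα]
  field_simp
  apply mul_left_cancel₀ (sub_ne_zero.mpr hq1)
  linear_combination -h - q * b N * qInt_mul_sub_one q N

theorem sum_qChoose_mul_beta {q : K} (hq0 : q ≠ 0) (hq : ∀ n : ℕ, 1 ≤ n → qInt q n ≠ 0)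
    {b : ℕ → K} (hb0 : b 0 = 1)
    (hb : ∀ n : ℕ, 2 ≤ n → ∑ k ∈ Finset.range n, qChoose q n k * b k = 0) {βB : ℕ → K}
    (hβB0 : βB 0 = 1) (hβB : ∀ m : ℕ, 1 ≤ m →
      βB m = ((q - 1) / q) * ∑ j ∈ Finset.range (m + 1), qChoose q m j * b j) (N : ℕ) :
    ∑ r ∈ Finset.range (N + 1), βB r * (qChoose q N r * (q ^ (N - r) * b (N - r))) = b N := by
  have h := qBernoulli_conv_identity hq hb0 hb N
  set T := ∑ k ∈ Finset.Icc 1 N, qChoose q N k *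
    (∑ j ∈ Finset.range (k + 1), qChoose q k j * b j) * (q ^ (N - k) * b (N - k))
  have hβ : ∑ k ∈ Finset.Icc 1 N, βB k * (qChoose q N k * (q ^ (N - k) * b (N - k))) =
      (q - 1) / q * T := by
    rw [Finset.mul_sum]
    exact Finset.sum_congr rfl fun k hk => by rw [hβB k (Finset.mem_Icc.mp hk).1]; ring
  rw [sum_range_succ_eq_add_sum_Icc, hβ, hβB0, qChoose_zero_right hq, Nat.sub_zero]
  field_simp
  linear_combination h

theorem coeff_qDeriv (q : K) (v : Fin 2) (P : MvPolynomial (Fin 2) K) (t : Fin 2 →₀ ℕ) :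
    coeff t (qDeriv q v P) = coeff (t + Finsupp.single v 1) P * qInt q (t v + 1) := by
  classical
  have hterm : ∀ m : Fin 2 →₀ ℕ,
      coeff t (monomial (m - Finsupp.single v 1) (P.coeff m * qInt q (m v))) =
        if m = t + Finsupp.single v 1 then coeff m P * qInt q (m v) else 0 := by
    intro m
    rw [coeff_monomial]
    by_cases hm : m = t + Finsupp.single v 1
    · simp [hm]
    · rw [if_neg hm]
      split_ifs with h
      · have hv : m v = 0 := by
          by_contra hv
          refine hm ?_
          rw [← h, tsub_add_cancel_of_le
            (Finsupp.single_le_iff.mpr (Nat.one_le_iff_ne_zero.mpr hv))]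
        rw [hv, qInt_zero, mul_zero]
      · rfl
  rw [qDeriv, coeff_sum, Finset.sum_congr rfl fun m _ => hterm m, Finset.sum_ite_eq']
  split_ifs with h
  · simp
  · simp [notMem_support_iff.mp h]

theorem qDeriv_C_mul (q c : K) (v : Fin 2) (P : MvPolynomial (Fin 2) K) :
    qDeriv q v (C c * P) = C c * qDeriv q v P := by
  ext t
  simp only [coeff_qDeriv, coeff_C_mul, mul_assoc]

theorem substX_monomial (c : K) (s : Fin 2 →₀ ℕ) (a : K) :
    substX c (monomial s a) = monomial s (c ^ s 0 * a) := by
  rw [substX, aeval_monomial, Finsupp.prod_fintype _ _ fun _ => pow_zero _, Fin.prod_univ_two,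
    monomial_eq, Finsupp.prod_fintype _ _ fun _ => pow_zero _, Fin.prod_univ_two]
  simp only [Fin.isValue, ↓reduceIte, one_ne_zero, algebraMap_eq, mul_pow, map_mul, map_pow]
  ring

theorem coeff_substX (c : K) (P : MvPolynomial (Fin 2) K) (t : Fin 2 →₀ ℕ) :
    coeff t (substX c P) = c ^ t 0 * coeff t P := by
  classical
  induction P using MvPolynomial.induction_on' with
  | monomial s a =>
    rw [substX_monomial, coeff_monomial, coeff_monomial]
    split_ifs with h
    · rw [h]
    · rw [mul_zero]
  | add P Q hP hQ =>
    rw [substX, map_add, coeff_add, ← substX, ← substX, hP, hQ, coeff_add, mul_add]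

def qTrinomial (q : K) (n j l : ℕ) : K := qFact q n / (qFact q (n - j - l) * qFact q j * qFact q l)

def appellCoeff (q : K) (a : ℕ → K) (n j l : ℕ) : K :=
  if j + l ≤ n then qTrinomial q n j l * a (n - j - l) * q ^ (l * (l - 1) / 2) else 0

theorem single_add_single_eq_iff (j l : ℕ) (t : Fin 2 →₀ ℕ) :
    Finsupp.single 0 j + Finsupp.single 1 l = t ↔ j = t 0 ∧ l = t 1 := by
  rw [Finsupp.ext_iff, Fin.forall_fin_two]
  simp

theorem coeff_appell (q : K) (a : ℕ → K) (n : ℕ) (t : Fin 2 →₀ ℕ) :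
    coeff t (appell q a n) = appellCoeff q a n (t 0) (t 1) := by
  classical
  simp only [appell, coeff_sum, coeff_monomial, single_add_single_eq_iff, appellCoeff, qTrinomial]
  split_ifs with h
  · rw [Finset.sum_eq_single_of_mem (n - t 0 - t 1) (by simp; omega),
      Finset.sum_eq_single_of_mem (t 0) (by simp; omega), if_pos ⟨rfl, by omega⟩]
    · rw [show n - (n - t 0 - t 1) - t 0 = t 1 by omega]
    · intro j _ hj
      exact if_neg fun hj' => hj hj'.1
    · intro i _ hi
      exact Finset.sum_eq_zero fun j hj => if_neg fun hj' => hi (by simp at hj; omega)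
  · exact Finset.sum_eq_zero fun i hi => Finset.sum_eq_zero fun j hj =>
      if_neg fun hij => h (by simp at hi hj; omega)

theorem qDeriv_appell {q : K} (hq : ∀ n : ℕ, 1 ≤ n → qInt q n ≠ 0) (a : ℕ → K) (n : ℕ) :
    qDeriv q 0 (appell q a n) = C (qInt q n) * appell q a (n - 1) := by
  ext t
  rw [coeff_qDeriv, coeff_C_mul, coeff_appell, coeff_appell]
  simp only [Finsupp.add_apply, Finsupp.single_eq_same, Fin.isValue,
    Finsupp.single_eq_of_ne (show (1 : Fin 2) ≠ 0 by decide), add_zero, appellCoeff, qTrinomial]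
  rcases n with _ | n
  · simp [qInt_zero]
  split_ifs with h₁ h₂ h₂
  · rw [show n + 1 - (t 0 + 1) - t 1 = n - t 0 - t 1 by omega, qFact_succ, qFact_succ,
      Nat.add_sub_cancel]
    field_simp [qFact_ne_zero hq, hq (n + 1) n.succ_pos, hq (t 0 + 1) (t 0).succ_pos]
  all_goals first | (exfalso; omega) | simp

theorem iterate_qDeriv_appell {q : K} (hq : ∀ n : ℕ, 1 ≤ n → qInt q n ≠ 0) (a : ℕ → K) {n k : ℕ}
    (hk : k ≤ n) :
    (qDeriv q 0)^[k] (appell q a n) = C (qFact q n / qFact q (n - k)) * appell q a (n - k) := by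
  induction k with
  | zero => simp [div_self (qFact_ne_zero hq n)]
  | succ k ih =>
    obtain ⟨m, hm⟩ : ∃ m, n - k = m + 1 := ⟨n - k - 1, by omega⟩
    rw [Function.iterate_succ_apply', ih (by omega), qDeriv_C_mul, qDeriv_appell hq, ← mul_assoc,
      ← C_mul, hm, show n - (k + 1) = m by omega, Nat.add_sub_cancel, qFact_succ]
    field_simp [qFact_ne_zero hq m, hq (m + 1) m.succ_pos]

theorem appellCoeff_of_lt (q : K) (a : ℕ → K) {n j l : ℕ} (h : n < j + l) :
    appellCoeff q a n j l = 0 :=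
  if_neg (by omega)

theorem appellCoeff_add (q : K) (a : ℕ → K) (j l N : ℕ) :
    appellCoeff q a (j + l + N) j l =
      qTrinomial q (j + l + N) j l * q ^ (l * (l - 1) / 2) * a N := by
  rw [appellCoeff, if_pos (by omega), show j + l + N - j - l = N by omega]
  ring

theorem appellCoeff_x_term {q : K} (hq : ∀ n : ℕ, 1 ≤ n → qInt q n ≠ 0) (a : ℕ → K) (j l N : ℕ) :
    q ^ (j + l + N) * (if j ≠ 0 then qInt q (j + l + N) * appellCoeff q a (j + l + N - 1) (j - 1) l
      else 0) =
      qTrinomial q (j + l + N) j l * q ^ (l * (l - 1) / 2) * q ^ (j + l + N) * qInt q j * a N := by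
  rcases j with _ | j
  · simp [qInt_zero]
  rw [if_pos j.succ_ne_zero, show j + 1 + l + N - 1 = j + l + N by omega, Nat.add_sub_cancel,
    appellCoeff_add, qTrinomial, qTrinomial, show j + 1 + l + N - (j + 1) - l = N by omega,
    show j + l + N - j - l = N by omega, show j + 1 + l + N = j + l + N + 1 by omega, qFact_succ,
    qFact_succ q j]
  field_simp [qFact_ne_zero hq, hq (j + 1) j.succ_pos]

theorem appellCoeff_alpha_term {q : K} (hq : ∀ n : ℕ, 1 ≤ n → qInt q n ≠ 0) (a : ℕ → K)
    {j l N k : ℕ} (hk : k ≤ j + l + N) :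
    q ^ (j + l + N - k) / qFact q k *
        (qFact q (j + l + N) / qFact q (j + l + N - k) * appellCoeff q a (j + l + N - k) j l) =
      qTrinomial q (j + l + N) j l * q ^ (l * (l - 1) / 2) * q ^ (j + l) *
        (if k ≤ N then qChoose q N k * (q ^ (N - k) * a (N - k)) else 0) := by
  unfold appellCoeff qTrinomial
  split_ifs with h₁ h₂ h₂
  · obtain ⟨M, rfl⟩ : ∃ M, N = k + M := ⟨N - k, by omega⟩
    rw [show j + l + (k + M) - k = j + l + M by omega, show j + l + M - j - l = M by omega,
      show j + l + (k + M) - j - l = k + M by omega, Nat.add_sub_cancel_left, pow_add, qChoose,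
      Nat.add_sub_cancel_left]
    field_simp [qFact_ne_zero hq]
  all_goals first | (exfalso; omega) | simp

theorem appellCoeff_beta_term {q : K} (hq : ∀ n : ℕ, 1 ≤ n → qInt q n ≠ 0) (a : ℕ → K)
    {j l N k : ℕ} (hk₀ : 1 ≤ k) (hk : k ≤ j + l + N) :
    q ^ (j + l + N - k) / qFact q k * (qInt q k *
        (if l ≠ 0 then qFact q (j + l + N) / qFact q (j + l + N - k) *
          appellCoeff q a (j + l + N - k) j (l - 1) else 0)) =
      qTrinomial q (j + l + N) j l * q ^ (l * (l - 1) / 2) * qInt q l * q ^ j *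
        (if k ≤ N + 1 then qChoose q N (k - 1) * (q ^ (N - (k - 1)) * a (N - (k - 1))) else 0) := by
  obtain ⟨r, rfl⟩ : ∃ r, k = r + 1 := ⟨k - 1, by omega⟩
  rcases l with _ | l
  · simp [qInt_zero]
  unfold appellCoeff qTrinomial
  simp only [Nat.add_sub_cancel, ne_eq, Nat.add_one_ne_zero, not_false_eq_true, if_true]
  split_ifs with h₁ h₂ h₂
  · obtain ⟨M, rfl⟩ : ∃ M, N = r + M := ⟨N - r, by omega⟩
    rw [show j + (l + 1) + (r + M) - (r + 1) = j + l + M by omega,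
      show j + l + M - j - l = M by omega,
      show j + (l + 1) + (r + M) - j - (l + 1) = r + M by omega, Nat.add_sub_cancel_left, qChoose,
      Nat.add_sub_cancel_left, qFact_succ q r, qFact_succ q l,
      show (l + 1) * l / 2 = l * (l - 1) / 2 + l from Nat.triangle_succ l,
      pow_add, pow_add, pow_add]
    field_simp [qFact_ne_zero hq, hq (r + 1) r.succ_pos, hq (l + 1) l.succ_pos]
  all_goals first | (exfalso; omega) | simp

-- The coefficient of `x^j y^l` in the left-hand side, once `coeff_appell`, `qDeriv_appell` and
-- `iterate_qDeriv_appell` have been applied.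
def qDiffXCoeff (q : K) (αB βB b : ℕ → K) (n j l : ℕ) : K :=
  (∑ k ∈ Finset.Icc 1 n,
      (q ^ (n - k) / qFact q k *
          (αB k * (qFact q n / qFact q (n - k) * appellCoeff q b (n - k) j l)) +
        q ^ (n - k) / qFact q k * (qInt q k * (βB (k - 1) *
          if l ≠ 0 then qFact q n / qFact q (n - k) * appellCoeff q b (n - k) j (l - 1) else 0))) +
      q ^ n * if j ≠ 0 then qInt q n * appellCoeff q b (n - 1) (j - 1) l else 0) -
    qInt q n * (q ^ j * appellCoeff q b n j l)

theorem qDiffXCoeff_eq_zero_of_lt {q : K} (αB βB b : ℕ → K) {n j l : ℕ} (h : n < j + l) :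
    qDiffXCoeff q αB βB b n j l = 0 := by
  rw [qDiffXCoeff, Finset.sum_eq_zero, appellCoeff_of_lt q b h]
  · split_ifs with hj
    · rcases Nat.eq_zero_or_pos n with rfl | hn
      · simp [qInt_zero]
      · rw [appellCoeff_of_lt q b (by omega : n - 1 < j - 1 + l)]; simp
    · simp
  · intro k hk
    rw [Finset.mem_Icc] at hk
    rw [appellCoeff_of_lt q b (by omega : n - k < j + l)]
    split_ifs
    · rw [appellCoeff_of_lt q b (by omega : n - k < j + (l - 1))]; simp
    · simp

theorem qDiffXCoeff_add_eq_zero {q : K} (hq0 : q ≠ 0) (hq1 : q ≠ 1)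
    (hq : ∀ n : ℕ, 1 ≤ n → qInt q n ≠ 0) {b : ℕ → K} (hb0 : b 0 = 1)
    (hb : ∀ n : ℕ, 2 ≤ n → ∑ k ∈ Finset.range n, qChoose q n k * b k = 0) {αB βB : ℕ → K}
    (hαB : ∀ k : ℕ, 1 ≤ k → αB k = -(1 / q) * ∑ j ∈ Finset.range (k + 1), qChoose q k j * b j)
    (hβB0 : βB 0 = 1) (hβB : ∀ m : ℕ, 1 ≤ m →
      βB m = ((q - 1) / q) * ∑ j ∈ Finset.range (m + 1), qChoose q m j * b j) (j l N : ℕ) :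
    qDiffXCoeff q αB βB b (j + l + N) j l = 0 := by
  set Φ := qTrinomial q (j + l + N) j l * q ^ (l * (l - 1) / 2)
  have hterm : ∀ k ∈ Finset.Icc 1 (j + l + N),
      q ^ (j + l + N - k) / qFact q k * (αB k * (qFact q (j + l + N) / qFact q (j + l + N - k) *
        appellCoeff q b (j + l + N - k) j l)) +
      q ^ (j + l + N - k) / qFact q k * (qInt q k * (βB (k - 1) *
        if l ≠ 0 then qFact q (j + l + N) / qFact q (j + l + N - k) *
          appellCoeff q b (j + l + N - k) j (l - 1) else 0)) =
      Φ * q ^ (j + l) * (if k ≤ N then αB k * (qChoose q N k * (q ^ (N - k) * b (N - k))) else 0) +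
      Φ * qInt q l * q ^ j * (if k ≤ N + 1 then βB (k - 1) *
        (qChoose q N (k - 1) * (q ^ (N - (k - 1)) * b (N - (k - 1)))) else 0) := by
    intro k hk
    rw [Finset.mem_Icc] at hk
    rw [mul_left_comm _ (αB k), appellCoeff_alpha_term hq b hk.2, mul_left_comm (qInt q k),
      mul_left_comm _ (βB (k - 1)), appellCoeff_beta_term hq b hk.1 hk.2]
    split_ifs <;> ring
  have hβ : qInt q l * ∑ k ∈ Finset.Icc 1 (j + l + N), (if k ≤ N + 1 then βB (k - 1) *
      (qChoose q N (k - 1) * (q ^ (N - (k - 1)) * b (N - (k - 1)))) else 0) = qInt q l * b N := by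
    rcases Nat.eq_zero_or_pos l with rfl | hl
    · simp [qInt_zero]
    · rw [sum_Icc_ite_le _ (by omega), sum_Icc_pred (fun r => βB r *
        (qChoose q N r * (q ^ (N - r) * b (N - r)))), sum_qChoose_mul_beta hq0 hq hb0 hb hβB0 hβB]
  have hα := sum_qChoose_mul_alpha hq0 hq1 hq hb0 hb hαB N
  rw [qDiffXCoeff, Finset.sum_congr rfl hterm, Finset.sum_add_distrib, ← Finset.mul_sum,
    ← Finset.mul_sum, sum_Icc_ite_le _ (by omega : N ≤ j + l + N), appellCoeff_x_term hq,
    appellCoeff_add, hα]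
  have hn : qInt q (j + l + N) = qInt q l + q ^ l * qInt q N + q ^ (l + N) * qInt q j := by
    rw [show j + l + N = l + N + j by ring, qInt_add, qInt_add]
  linear_combination Φ * q ^ j * hβ - Φ * q ^ j * b N * hn

end

theorem qBernoulli2D_qDifference_x_general
    {K : Type*} [Field K] (q : K) (hq0 : q ≠ 0) (hq1 : q ≠ 1)
    (hq : ∀ n : ℕ, 1 ≤ n → qInt q n ≠ 0)
    (b : ℕ → K) (hb0 : b 0 = 1)
    (hb : ∀ n : ℕ, 2 ≤ n → ∑ k ∈ Finset.range n, qChoose q n k * b k = 0)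
    (αB βB : ℕ → K)
    (hαB : ∀ k : ℕ, 1 ≤ k → αB k = -(1 / q) * ∑ j ∈ Finset.range (k + 1), qChoose q k j * b j)
    (hβB0 : βB 0 = 1)
    (hβB : ∀ m : ℕ, 1 ≤ m →
      βB m = ((q - 1) / q) * ∑ j ∈ Finset.range (m + 1), qChoose q m j * b j)
    (n : ℕ) :
    (∑ k ∈ Finset.Icc 1 n, C (q ^ (n - k) / qFact q k) *
        (C (αB k) + C (qInt q k * βB (k - 1)) * X 1) * (qDeriv q 0)^[k] (appell q b n)) +
      C (q ^ n) * X 0 * qDeriv q 0 (appell q b n) -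
      C (qInt q n) * substX q (appell q b n) = 0 := by
  rw [Finset.sum_congr rfl fun k hk => by
    rw [iterate_qDeriv_appell hq b (Finset.mem_Icc.mp hk).2], qDeriv_appell hq]
  ext t
  simp only [coeff_sub, coeff_add, coeff_sum, mul_add, add_mul, coeff_C_mul, mul_assoc,
    coeff_X_mul', coeff_zero, coeff_substX, coeff_appell, Finsupp.mem_support_iff,
    Finsupp.coe_tsub, Pi.sub_apply, Finsupp.single_eq_same, Nat.sub_zero,
    Finsupp.single_eq_of_ne (show (1 : Fin 2) ≠ 0 by decide),
    Finsupp.single_eq_of_ne (show (0 : Fin 2) ≠ 1 by decide)]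
  change qDiffXCoeff q αB βB b n (t 0) (t 1) = 0
  rcases lt_or_ge n (t 0 + t 1) with h | h
  · exact qDiffXCoeff_eq_zero_of_lt αB βB b h
  · obtain ⟨N, hN⟩ := Nat.exists_eq_add_of_le h
    rw [hN]
    exact qDiffXCoeff_add_eq_zero hq0 hq1 hq hb0 hb hαB hβB0 hβB _ _ N

/-- Partial `q`-difference equation in `x` for 2D `q`-Bernoulli polynomials. -/
theorem qBernoulli2D_qDifference_x
    {K : Type*} [Field K] [CharZero K] (q : K) (hq0 : q ≠ 0) (hq1 : q ≠ 1)
    (hq : ∀ n : ℕ, 1 ≤ n → qInt q n ≠ 0)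
    (b : ℕ → K) (hb0 : b 0 = 1)
    (hb : ∀ n : ℕ, 2 ≤ n → ∑ k ∈ Finset.range n, qChoose q n k * b k = 0)
    (αB βB : ℕ → K)
    (hαB : ∀ k : ℕ, 1 ≤ k → αB k = -(1 / q) * ∑ j ∈ Finset.range (k + 1), qChoose q k j * b j)
    (hβB0 : βB 0 = 1)
    (hβB : ∀ m : ℕ, 1 ≤ m →
      βB m = ((q - 1) / q) * ∑ j ∈ Finset.range (m + 1), qChoose q m j * b j)
    (n : ℕ) (hn : 1 ≤ n) :
    (∑ k ∈ Finset.Icc 1 n, C (q ^ (n - k) / qFact q k) *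
        (C (αB k) + C (qInt q k * βB (k - 1)) * X 1) * (qDeriv q 0)^[k] (appell q b n)) +
      C (q ^ n) * X 0 * qDeriv q 0 (appell q b n) -
      C (qInt q n) * substX q (appell q b n) = 0 :=
  qBernoulli2D_qDifference_x_general q hq0 hq1 hq b hb0 hb αB βB hαB hβB0 hβB n
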